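/- arXiv:2109.00306 — 2 statements merged into one kernel-verified Lean document; each statement's English description precedes it below -/
import Mathlib

section
/- Let Q be a convex set of probability measures equivalent to P that is stable under pasting, with derivative set D_T, and for each t let D̄_t := { E^P[D_T | F_t] : D_T ∈ D̄_T } where D̄_T is the L^1-closure of D_T. Then for each t, D̄_t is convex and closed in L^1(F_T, P). -/
/-!
`D̄_t` is the image of the closed convex set `closure D_T` under the continuous linear map
`Λ = E^P[· | ℱ_t]` on `L¹`, hence convex. For closedness fix `Q₀ ∈ 𝒬` with density `Z₀` and put
`Ψ X = E^P[X | ℱ_t] · Z₀ / E^P[Z₀ | ℱ_t]`. Then `Ψ` is continuous, `Λ ∘ Λ = Λ`, `Ψ ∘ Λ = Ψ`,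
`Λ ∘ Ψ = Λ`, and `Ψ` maps `D_T` into itself because `Ψ (dQ/dP)` is the density of the pasting
of `Q` and `Q₀` at the deterministic time `t`. Hence
`Λ '' closure D_T = {X | Λ X = X} ∩ Ψ ⁻¹' closure D_T`, which is closed.
-/
open MeasureTheory

variable {Ω : Type*} {m : MeasurableSpace Ω}

/-- `Q3` is the pasting of `Q1` and `Q2` in the stopping time `τ`. -/
def PastingOf (ℱ : Filtration ℕ m) (Q1 Q2 Q3 : Measure Ω)
    (τ : Ω → ℕ) (hτ : IsStoppingTime ℱ (fun ω => (τ ω : WithTop ℕ))) : Prop :=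
  ∀ A : Set Ω, MeasurableSet A →
    (Q3 A).toReal = ∫ ω, (Q2[A.indicator (fun _ => (1 : ℝ)) | hτ.measurableSpace]) ω ∂Q1

/-- Stability under pasting. -/
def StableUnderPasting (ℱ : Filtration ℕ m) (T : ℕ) (𝒬 : Set (Measure Ω)) : Prop :=
  ∀ Q1 ∈ 𝒬, ∀ Q2 ∈ 𝒬, ∀ (τ : Ω → ℕ) (hτ : IsStoppingTime ℱ (fun ω => (τ ω : WithTop ℕ))), (∀ ω, τ ω ≤ T) →
    ∀ Q3 : Measure Ω, IsProbabilityMeasure Q3 → PastingOf ℱ Q1 Q2 Q3 τ hτ → Q3 ∈ 𝒬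

/-- Convexity of a set of measures. -/
def ConvexMeasures (𝒬 : Set (Measure Ω)) : Prop :=
  ∀ Q1 ∈ 𝒬, ∀ Q2 ∈ 𝒬, ∀ c : NNReal, c ≤ 1 → (c • Q1 + (1 - c) • Q2) ∈ 𝒬

open Filter Set
open scoped ENNReal NNReal

theorem IsClosed.image_of_idempotent {X : Type*} [TopologicalSpace X] [T2Space X]
    {Λ Ψ : X → X} {C : Set X} (hC : IsClosed C) (hΛ : Continuous Λ) (hΨ : Continuous Ψ)
    (hΨC : MapsTo Ψ C C) (hΛΛ : ∀ x, Λ (Λ x) = Λ x) (hΨΛ : ∀ x, Ψ (Λ x) = Ψ x)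
    (hΛΨ : ∀ x, Λ (Ψ x) = Λ x) : IsClosed (Λ '' C) := by
  have h : Λ '' C = {x | Λ x = x} ∩ Ψ ⁻¹' C := by
    ext x
    constructor
    · rintro ⟨y, hy, rfl⟩
      exact ⟨hΛΛ y, by rw [mem_preimage, hΨΛ]; exact hΨC hy⟩
    · rintro ⟨hx, hΨx⟩
      exact ⟨Ψ x, hΨx, (hΛΨ x).trans hx⟩
  rw [h]
  exact (isClosed_eq hΛ continuous_id).inter (hC.preimage hΨ)

section CondExp

variable {α : Type*} {m m₀ : MeasurableSpace α} {μ : Measure α} {f : α → ℝ}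

theorem lintegral_ofReal_condExp_mul (hm : m ≤ m₀) [SigmaFinite (μ.trim hm)]
    (hf : Integrable f μ) (hf_nonneg : 0 ≤ᵐ[μ] f) {g : α → ℝ≥0∞} (hg : Measurable[m] g) :
    ∫⁻ ω, ENNReal.ofReal (μ[f|m] ω) * g ω ∂μ = ∫⁻ ω, ENNReal.ofReal (f ω) * g ω ∂μ := by
  -- both sides integrate `g` against measures with densities whose integrals agree on `m`-sets
  have htrim : (μ.withDensity fun ω => ENNReal.ofReal (μ[f|m] ω)).trim hm =
      (μ.withDensity fun ω => ENNReal.ofReal (f ω)).trim hm := by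
    refine @Measure.ext _ m _ _ fun s hs => ?_
    rw [trim_measurableSet_eq hm hs, trim_measurableSet_eq hm hs, withDensity_apply _ (hm s hs),
      withDensity_apply _ (hm s hs),
      ← ofReal_integral_eq_lintegral_ofReal integrable_condExp.integrableOn
        (ae_restrict_of_ae (condExp_nonneg hf_nonneg)),
      ← ofReal_integral_eq_lintegral_ofReal hf.integrableOn (ae_restrict_of_ae hf_nonneg),
      setIntegral_condExp hm hf hs]
  have hg₀ : Measurable g := hg.mono hm le_rfl
  calc ∫⁻ ω, ENNReal.ofReal (μ[f|m] ω) * g ω ∂μ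
      = ∫⁻ ω, g ω ∂(μ.withDensity fun ω => ENNReal.ofReal (μ[f|m] ω)).trim hm := by
        rw [lintegral_trim hm hg, lintegral_withDensity_eq_lintegral_mul₀
          integrable_condExp.aemeasurable.ennreal_ofReal hg₀.aemeasurable]
        rfl
    _ = ∫⁻ ω, ENNReal.ofReal (f ω) * g ω ∂μ := by
        rw [htrim, lintegral_trim hm hg, lintegral_withDensity_eq_lintegral_mul₀
          hf.aemeasurable.ennreal_ofReal hg₀.aemeasurable]
        rfl

theorem ae_pos_condExp (hm : m ≤ m₀) [SigmaFinite (μ.trim hm)] (hf : Integrable f μ)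
    (hf_pos : ∀ᵐ ω ∂μ, 0 < f ω) : ∀ᵐ ω ∂μ, 0 < μ[f|m] ω := by
  set S := {ω | μ[f|m] ω ≤ 0}
  have hS : MeasurableSet[m] S :=
    measurableSet_le stronglyMeasurable_condExp.measurable measurable_const
  have hg : Measurable[m] (S.indicator (1 : α → ℝ≥0∞)) :=
    Measurable.indicator (m := m) measurable_const hS
  have hzero : ∫⁻ ω, ENNReal.ofReal (f ω) * S.indicator 1 ω ∂μ = 0 := by
    rw [← lintegral_ofReal_condExp_mul hm hf (hf_pos.mono fun _ h => h.le) hg]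
    refine lintegral_eq_zero_of_ae_eq_zero (Eventually.of_forall fun ω => ?_)
    by_cases hω : ω ∈ S
    · simp [ENNReal.ofReal_eq_zero.2 hω]
    · simp [hω]
  have hg₀ : Measurable (S.indicator (1 : α → ℝ≥0∞)) := hg.mono hm le_rfl
  have hmeas := hf.aemeasurable.ennreal_ofReal.mul hg₀.aemeasurable
  filter_upwards [(lintegral_eq_zero_iff' hmeas).1 hzero, hf_pos] with ω h₀ hpos
  by_contra hω
  have hf_nonpos : f ω ≤ 0 := by simpa [S, hω] using h₀
  linarith

end CondExp

section DensityRatio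

variable {α : Type*} {m m₀ : MeasurableSpace α} {μ : Measure α} {f : α → ℝ}

noncomputable def densityRatio (m : MeasurableSpace α) (μ : Measure[m₀] α) (f : α → ℝ) :
    α → ℝ :=
  (μ[f|m])⁻¹ * f

theorem stronglyMeasurable_inv_condExp : StronglyMeasurable[m] (μ[f|m])⁻¹ :=
  (stronglyMeasurable_condExp.measurable.inv).stronglyMeasurable

theorem aestronglyMeasurable_densityRatio (hm : m ≤ m₀) (hf : Integrable f μ) :
    AEStronglyMeasurable (densityRatio m μ f) μ :=
  (stronglyMeasurable_inv_condExp.mono hm).aestronglyMeasurable.mul hf.1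

theorem densityRatio_nonneg (hm : m ≤ m₀) [SigmaFinite (μ.trim hm)]
    (hf : Integrable f μ) (hf_pos : ∀ᵐ ω ∂μ, 0 < f ω) :
    0 ≤ᵐ[μ] densityRatio m μ f := by
  filter_upwards [ae_pos_condExp hm hf hf_pos, hf_pos] with ω he hfω
  exact mul_nonneg (inv_nonneg.2 he.le) hfω.le

theorem lintegral_ofReal_densityRatio_mul (hm : m ≤ m₀) [SigmaFinite (μ.trim hm)]
    (hf : Integrable f μ) (hf_pos : ∀ᵐ ω ∂μ, 0 < f ω)
    {g : α → ℝ≥0∞} (hg : Measurable[m] g) :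
    ∫⁻ ω, ENNReal.ofReal (densityRatio m μ f ω) * g ω ∂μ = ∫⁻ ω, g ω ∂μ := by
  have he := ae_pos_condExp hm hf hf_pos
  have hg' : Measurable[m] fun ω => (ENNReal.ofReal (μ[f|m] ω))⁻¹ * g ω :=
    (stronglyMeasurable_condExp.measurable.ennreal_ofReal.inv).mul hg
  calc ∫⁻ ω, ENNReal.ofReal (densityRatio m μ f ω) * g ω ∂μ
      = ∫⁻ ω, ENNReal.ofReal (f ω) * ((ENNReal.ofReal (μ[f|m] ω))⁻¹ * g ω) ∂μ := by
        refine lintegral_congr_ae ?_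
        filter_upwards [he] with ω hω
        rw [densityRatio, Pi.mul_apply, Pi.inv_apply, ENNReal.ofReal_mul (inv_nonneg.2 hω.le),
          ENNReal.ofReal_inv_of_pos hω]
        ring
    _ = ∫⁻ ω, ENNReal.ofReal (μ[f|m] ω) * ((ENNReal.ofReal (μ[f|m] ω))⁻¹ * g ω) ∂μ :=
        (lintegral_ofReal_condExp_mul hm hf (hf_pos.mono fun _ h => h.le) hg').symm
    _ = ∫⁻ ω, g ω ∂μ := by
        refine lintegral_congr_ae ?_
        filter_upwards [he] with ω hω
        exact ENNReal.mul_inv_cancel_left (ENNReal.ofReal_pos.2 hω).ne' ENNReal.ofReal_ne_top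

theorem eLpNorm_one_mul_densityRatio (hm : m ≤ m₀) [SigmaFinite (μ.trim hm)]
    (hf : Integrable f μ) (hf_pos : ∀ᵐ ω ∂μ, 0 < f ω)
    {u : α → ℝ} (hu : StronglyMeasurable[m] u) :
    eLpNorm (u * densityRatio m μ f) 1 μ = eLpNorm u 1 μ := by
  rw [eLpNorm_one_eq_lintegral_enorm, eLpNorm_one_eq_lintegral_enorm,
    ← lintegral_ofReal_densityRatio_mul hm hf hf_pos hu.enorm]
  refine lintegral_congr_ae ?_
  filter_upwards [densityRatio_nonneg hm hf hf_pos] with ω hω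
  rw [Pi.mul_apply, enorm_mul, Real.enorm_eq_ofReal hω, mul_comm]

theorem integrable_mul_densityRatio (hm : m ≤ m₀) [SigmaFinite (μ.trim hm)]
    (hf : Integrable f μ) (hf_pos : ∀ᵐ ω ∂μ, 0 < f ω)
    {u : α → ℝ} (hu : StronglyMeasurable[m] u) (hu_int : Integrable u μ) :
    Integrable (u * densityRatio m μ f) μ := by
  refine memLp_one_iff_integrable.1 ⟨(hu.mono hm).aestronglyMeasurable.mul
    (aestronglyMeasurable_densityRatio hm hf), ?_⟩
  rw [eLpNorm_one_mul_densityRatio hm hf hf_pos hu]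
  exact (memLp_one_iff_integrable.2 hu_int).2

theorem condExp_mul_densityRatio (hm : m ≤ m₀) [SigmaFinite (μ.trim hm)]
    (hf : Integrable f μ) (hf_pos : ∀ᵐ ω ∂μ, 0 < f ω)
    {u : α → ℝ} (hu : StronglyMeasurable[m] u) (hu_int : Integrable u μ) :
    μ[u * densityRatio m μ f|m] =ᵐ[μ] u := by
  have h_assoc : u * densityRatio m μ f = u * (μ[f|m])⁻¹ * f := by
    rw [densityRatio, mul_assoc]
  have h_int := integrable_mul_densityRatio hm hf hf_pos hu hu_int
  rw [h_assoc] at h_int ⊢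
  refine (condExp_mul_of_stronglyMeasurable_left (hu.mul stronglyMeasurable_inv_condExp)
    h_int hf).trans ?_
  filter_upwards [ae_pos_condExp hm hf hf_pos] with ω hω
  simp [hω.ne']

end DensityRatio

section Pasting

variable {α : Type*} {m m₀ : MeasurableSpace α} {μ ν ν₁ ν₀ : Measure α}

theorem lintegral_ofReal_toReal_rnDeriv_mul [SigmaFinite μ] [IsFiniteMeasure ν] (hνμ : ν ≪ μ)
    {g : α → ℝ≥0∞} (hg : AEMeasurable g μ) :
    ∫⁻ ω, ENNReal.ofReal (ν.rnDeriv μ ω).toReal * g ω ∂μ = ∫⁻ ω, g ω ∂ν := by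
  rw [← lintegral_rnDeriv_mul hνμ hg]
  refine lintegral_congr_ae ?_
  filter_upwards [Measure.rnDeriv_lt_top ν μ] with ω hω
  rw [ENNReal.ofReal_toReal hω.ne]

theorem toReal_rnDeriv_pos [SigmaFinite μ] [IsFiniteMeasure ν] (hμν : μ ≪ ν) :
    ∀ᵐ ω ∂μ, 0 < (ν.rnDeriv μ ω).toReal := by
  filter_upwards [Measure.rnDeriv_pos' hμν, Measure.rnDeriv_lt_top ν μ] with ω hpos hlt
  exact ENNReal.toReal_pos hpos.ne' hlt.ne

-- Bayes' formula `ν[1_A|m] = μ[1_A · dν/dμ|m] / μ[dν/dμ|m]`, integrated against `g`.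
theorem lintegral_ofReal_condExp_indicator_mul (hm : m ≤ m₀) [IsFiniteMeasure μ]
    [IsFiniteMeasure ν] (hνμ : ν ≪ μ) (hμν : μ ≪ ν) {A : Set α} (hA : MeasurableSet A)
    {g : α → ℝ≥0∞} (hg : Measurable[m] g) :
    ∫⁻ ω, ENNReal.ofReal (ν[A.indicator (fun _ => (1 : ℝ))|m] ω) * g ω ∂μ =
      ∫⁻ ω in A,
        ENNReal.ofReal (densityRatio m μ (fun ω => (ν.rnDeriv μ ω).toReal) ω) * g ω ∂μ := by
  set f : α → ℝ := fun ω => (ν.rnDeriv μ ω).toReal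
  set k := ν[A.indicator (fun _ => (1 : ℝ))|m]
  set c : α → ℝ≥0∞ := fun ω => (ENNReal.ofReal (μ[f|m] ω))⁻¹
  have hf : Integrable f μ := Measure.integrable_toReal_rnDeriv
  have hf_pos : ∀ᵐ ω ∂μ, 0 < f ω := toReal_rnDeriv_pos hμν
  have hc : Measurable[m] c := stronglyMeasurable_condExp.measurable.ennreal_ofReal.inv
  have hk : Measurable[m] fun ω => ENNReal.ofReal (k ω) :=
    stronglyMeasurable_condExp.measurable.ennreal_ofReal
  have hA_int : Integrable (A.indicator fun _ => (1 : ℝ)) ν := (integrable_const _).indicator hA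
  have hA_nonneg : 0 ≤ᵐ[ν] A.indicator fun _ => (1 : ℝ) :=
    Eventually.of_forall (Set.indicator_nonneg fun _ _ => zero_le_one)
  have hw : ∀ᵐ ω ∂μ, ENNReal.ofReal (densityRatio m μ f ω) = c ω * ENNReal.ofReal (f ω) := by
    filter_upwards [ae_pos_condExp hm hf hf_pos] with ω hω
    rw [densityRatio, Pi.mul_apply, Pi.inv_apply, ENNReal.ofReal_mul (inv_nonneg.2 hω.le),
      ENNReal.ofReal_inv_of_pos hω]
  calc ∫⁻ ω, ENNReal.ofReal (k ω) * g ω ∂μ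
      = ∫⁻ ω, ENNReal.ofReal (densityRatio m μ f ω) * (ENNReal.ofReal (k ω) * g ω) ∂μ :=
        (lintegral_ofReal_densityRatio_mul hm hf hf_pos (hk.mul hg)).symm
    _ = ∫⁻ ω, ENNReal.ofReal (f ω) * (ENNReal.ofReal (k ω) * (c ω * g ω)) ∂μ := by
        refine lintegral_congr_ae ?_
        filter_upwards [hw] with ω hω
        rw [hω]
        ring
    _ = ∫⁻ ω, ENNReal.ofReal (k ω) * (c ω * g ω) ∂ν :=
        lintegral_ofReal_toReal_rnDeriv_mul hνμ
          ((hk.mul (hc.mul hg)).mono hm le_rfl).aemeasurable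
    _ = ∫⁻ ω, ENNReal.ofReal (A.indicator (fun _ => (1 : ℝ)) ω) * (c ω * g ω) ∂ν :=
        lintegral_ofReal_condExp_mul hm hA_int hA_nonneg (hc.mul hg)
    _ = ∫⁻ ω, ENNReal.ofReal (f ω) *
          (ENNReal.ofReal (A.indicator (fun _ => (1 : ℝ)) ω) * (c ω * g ω)) ∂μ :=
        (lintegral_ofReal_toReal_rnDeriv_mul hνμ
          ((((measurable_const.indicator hA).ennreal_ofReal).mul
            ((hc.mul hg).mono hm le_rfl)).aemeasurable)).symm
    _ = ∫⁻ ω, A.indicator (fun ω => ENNReal.ofReal (densityRatio m μ f ω) * g ω) ω ∂μ := by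
        refine lintegral_congr_ae ?_
        filter_upwards [hw] with ω hω
        by_cases hωA : ω ∈ A
        · simp only [Set.indicator_of_mem hωA, ENNReal.ofReal_one, hω]
          ring
        · simp [Set.indicator_of_notMem hωA]
    _ = _ := lintegral_indicator hA _

noncomputable def pasteDensity (m : MeasurableSpace α) (μ ν₁ ν₀ : Measure[m₀] α) : α → ℝ :=
  μ[fun ω => (ν₁.rnDeriv μ ω).toReal|m] * densityRatio m μ fun ω => (ν₀.rnDeriv μ ω).toReal

theorem measurable_pasteDensity (hm : m ≤ m₀) : Measurable (pasteDensity m μ ν₁ ν₀) :=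
  (stronglyMeasurable_condExp.measurable.mono hm le_rfl).mul
    ((stronglyMeasurable_inv_condExp.measurable.mono hm le_rfl).mul
      (Measure.measurable_rnDeriv _ _).ennreal_toReal)

theorem pasteDensity_nonneg (hm : m ≤ m₀) [IsFiniteMeasure μ] [IsFiniteMeasure ν₀]
    (h₀ : μ ≪ ν₀) : 0 ≤ᵐ[μ] pasteDensity m μ ν₁ ν₀ := by
  filter_upwards [condExp_nonneg (m := m) (Eventually.of_forall fun ω => ENNReal.toReal_nonneg),
    densityRatio_nonneg hm Measure.integrable_toReal_rnDeriv (toReal_rnDeriv_pos h₀)]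
    with ω h₁ h₂
  exact mul_nonneg h₁ h₂

theorem withDensity_ofReal_pasteDensity_apply (hm : m ≤ m₀) [IsFiniteMeasure μ]
    [IsFiniteMeasure ν₁] [IsFiniteMeasure ν₀] (h₁ : ν₁ ≪ μ) (h₀ : ν₀ ≪ μ) (h₀' : μ ≪ ν₀)
    {A : Set α} (hA : MeasurableSet A) :
    μ.withDensity (fun ω => ENNReal.ofReal (pasteDensity m μ ν₁ ν₀ ω)) A =
      ∫⁻ ω, ENNReal.ofReal (ν₀[A.indicator (fun _ => (1 : ℝ))|m] ω) ∂ν₁ := by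
  set u : α → ℝ := μ[fun ω => (ν₁.rnDeriv μ ω).toReal|m]
  have hu : Measurable[m] fun ω => ENNReal.ofReal (u ω) :=
    stronglyMeasurable_condExp.measurable.ennreal_ofReal
  have hk : Measurable fun ω => ENNReal.ofReal (ν₀[A.indicator (fun _ => (1 : ℝ))|m] ω) :=
    (stronglyMeasurable_condExp.measurable.mono hm le_rfl).ennreal_ofReal
  calc μ.withDensity (fun ω => ENNReal.ofReal (pasteDensity m μ ν₁ ν₀ ω)) A
      = ∫⁻ ω in A, ENNReal.ofReal
          (densityRatio m μ (fun ω => (ν₀.rnDeriv μ ω).toReal) ω) * ENNReal.ofReal (u ω) ∂μ := by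
        rw [withDensity_apply _ hA]
        refine lintegral_congr_ae (ae_restrict_of_ae ?_)
        filter_upwards [condExp_nonneg (m := m)
          (Eventually.of_forall fun ω => ENNReal.toReal_nonneg)] with ω hω
        rw [pasteDensity, Pi.mul_apply, ENNReal.ofReal_mul hω, mul_comm]
    _ = ∫⁻ ω, ENNReal.ofReal (u ω) *
          ENNReal.ofReal (ν₀[A.indicator (fun _ => (1 : ℝ))|m] ω) ∂μ := by
        rw [← lintegral_ofReal_condExp_indicator_mul hm h₀ h₀' hA hu]
        simp_rw [mul_comm]
    _ = ∫⁻ ω, ENNReal.ofReal ((ν₁.rnDeriv μ ω).toReal) *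
          ENNReal.ofReal (ν₀[A.indicator (fun _ => (1 : ℝ))|m] ω) ∂μ :=
        lintegral_ofReal_condExp_mul hm Measure.integrable_toReal_rnDeriv
          (Eventually.of_forall fun ω => ENNReal.toReal_nonneg)
          stronglyMeasurable_condExp.measurable.ennreal_ofReal
    _ = _ := lintegral_ofReal_toReal_rnDeriv_mul h₁ hk.aemeasurable

theorem isProbabilityMeasure_withDensity_ofReal_pasteDensity (hm : m ≤ m₀)
    [IsFiniteMeasure μ] [IsProbabilityMeasure ν₁] [IsFiniteMeasure ν₀] (h₁ : ν₁ ≪ μ)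
    (h₀ : ν₀ ≪ μ) (h₀' : μ ≪ ν₀) :
    IsProbabilityMeasure (μ.withDensity fun ω => ENNReal.ofReal (pasteDensity m μ ν₁ ν₀ ω)) := by
  constructor
  rw [withDensity_ofReal_pasteDensity_apply hm h₁ h₀ h₀' MeasurableSet.univ]
  simp [condExp_const hm]

end Pasting

section PasteL1

variable {α : Type*} {m m₀ : MeasurableSpace α} {μ : Measure α} {f : α → ℝ}

theorem coeFn_condExpL1CLM (hm : m ≤ m₀) [SigmaFinite (μ.trim hm)] (x : α →₁[μ] ℝ) :
    condExpL1CLM ℝ hm μ x =ᵐ[μ] μ[x|m] := by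
  have h := condExp_ae_eq_condExpL1CLM hm (L1.integrable_coeFn x)
  rw [Integrable.toL1_coeFn] at h
  exact h.symm

theorem condExp_condExpL1CLM (hm : m ≤ m₀) [SigmaFinite (μ.trim hm)] (x : α →₁[μ] ℝ) :
    μ[condExpL1CLM ℝ hm μ x|m] =ᵐ[μ] μ[x|m] :=
  (condExp_congr_ae (coeFn_condExpL1CLM hm x)).trans (condExp_condExp_of_le le_rfl hm)

theorem condExpL1CLM_condExpL1CLM (hm : m ≤ m₀) [SigmaFinite (μ.trim hm)] (x : α →₁[μ] ℝ) :
    condExpL1CLM ℝ hm μ (condExpL1CLM ℝ hm μ x) = condExpL1CLM ℝ hm μ x :=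
  Lp.ext (((coeFn_condExpL1CLM hm _).trans (condExp_condExpL1CLM hm x)).trans
    (coeFn_condExpL1CLM hm x).symm)

theorem image_condExpL1CLM (hm : m ≤ m₀) [SigmaFinite (μ.trim hm)] (C : Set (α →₁[μ] ℝ)) :
    condExpL1CLM ℝ hm μ '' C = {g : α →₁[μ] ℝ | ∃ x ∈ C, g =ᵐ[μ] μ[x|m]} := by
  ext g
  constructor
  · rintro ⟨x, hx, rfl⟩
    exact ⟨x, hx, coeFn_condExpL1CLM hm x⟩
  · rintro ⟨x, hx, hg⟩
    exact ⟨x, hx, Lp.ext ((coeFn_condExpL1CLM hm x).trans hg.symm)⟩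

variable (hm : m ≤ m₀) [SigmaFinite (μ.trim hm)] (hf : Integrable f μ)
  (hf_pos : ∀ᵐ ω ∂μ, 0 < f ω)

noncomputable def pasteL1 (x : α →₁[μ] ℝ) : α →₁[μ] ℝ :=
  (integrable_mul_densityRatio hm hf hf_pos stronglyMeasurable_condExp
    (integrable_condExp (f := x))).toL1 _

theorem coeFn_pasteL1 (x : α →₁[μ] ℝ) :
    pasteL1 hm hf hf_pos x =ᵐ[μ] μ[x|m] * densityRatio m μ f :=
  Integrable.coeFn_toL1 _

theorem dist_pasteL1 (x y : α →₁[μ] ℝ) :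
    dist (pasteL1 hm hf hf_pos x) (pasteL1 hm hf hf_pos y) =
      dist (condExpL1CLM ℝ hm μ x) (condExpL1CLM ℝ hm μ y) := by
  rw [Lp.dist_def, Lp.dist_def]
  congr 1
  calc eLpNorm (⇑(pasteL1 hm hf hf_pos x) - ⇑(pasteL1 hm hf hf_pos y)) 1 μ
      = eLpNorm ((μ[x|m] - μ[y|m]) * densityRatio m μ f) 1 μ := by
        refine eLpNorm_congr_ae ?_
        filter_upwards [coeFn_pasteL1 hm hf hf_pos x, coeFn_pasteL1 hm hf hf_pos y]
          with ω hx hy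
        simp only [Pi.sub_apply, Pi.mul_apply, hx, hy, sub_mul]
    _ = eLpNorm (μ[x|m] - μ[y|m]) 1 μ :=
        eLpNorm_one_mul_densityRatio hm hf hf_pos
          (stronglyMeasurable_condExp.sub stronglyMeasurable_condExp)
    _ = eLpNorm (⇑(condExpL1CLM ℝ hm μ x) - ⇑(condExpL1CLM ℝ hm μ y)) 1 μ :=
        eLpNorm_congr_ae ((coeFn_condExpL1CLM hm x).sub (coeFn_condExpL1CLM hm y)).symm

theorem continuous_pasteL1 : Continuous (pasteL1 hm hf hf_pos) := by
  refine Metric.continuous_iff.2 fun x ε hε => ?_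
  obtain ⟨δ, hδ, h⟩ := Metric.continuous_iff.1 (condExpL1CLM ℝ hm μ).continuous x ε hε
  exact ⟨δ, hδ, fun y hy => (dist_pasteL1 hm hf hf_pos y x).trans_lt (h y hy)⟩

theorem condExpL1CLM_pasteL1 (x : α →₁[μ] ℝ) :
    condExpL1CLM ℝ hm μ (pasteL1 hm hf hf_pos x) = condExpL1CLM ℝ hm μ x := by
  refine Lp.ext ((coeFn_condExpL1CLM hm _).trans ?_)
  refine (condExp_congr_ae (coeFn_pasteL1 hm hf hf_pos x)).trans ?_
  exact (condExp_mul_densityRatio hm hf hf_pos stronglyMeasurable_condExp integrable_condExp).trans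
    (coeFn_condExpL1CLM hm x).symm

theorem pasteL1_condExpL1CLM (x : α →₁[μ] ℝ) :
    pasteL1 hm hf hf_pos (condExpL1CLM ℝ hm μ x) = pasteL1 hm hf hf_pos x := by
  refine Lp.ext ?_
  filter_upwards [coeFn_pasteL1 hm hf hf_pos (condExpL1CLM ℝ hm μ x),
    coeFn_pasteL1 hm hf hf_pos x, condExp_condExpL1CLM hm x] with ω h₁ h₂ h₃
  rw [h₁, h₂, Pi.mul_apply, Pi.mul_apply, h₃]

theorem isClosed_image_condExpL1CLM {C : Set (α →₁[μ] ℝ)} (hC : IsClosed C)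
    (hC_paste : MapsTo (pasteL1 hm hf hf_pos) C C) : IsClosed (condExpL1CLM ℝ hm μ '' C) :=
  hC.image_of_idempotent (condExpL1CLM ℝ hm μ).continuous (continuous_pasteL1 hm hf hf_pos)
    hC_paste (condExpL1CLM_condExpL1CLM hm) (pasteL1_condExpL1CLM hm hf hf_pos)
    (condExpL1CLM_pasteL1 hm hf hf_pos)

end PasteL1

theorem toReal_rnDeriv_smul_add_smul {α : Type*} {m₀ : MeasurableSpace α} {μ ν₁ ν₂ : Measure α}
    [SigmaFinite μ] [IsFiniteMeasure ν₁] [IsFiniteMeasure ν₂] (a b : ℝ≥0) :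
    (fun ω => ((a • ν₁ + b • ν₂).rnDeriv μ ω).toReal) =ᵐ[μ]
      fun ω => a * (ν₁.rnDeriv μ ω).toReal + b * (ν₂.rnDeriv μ ω).toReal := by
  filter_upwards [Measure.rnDeriv_add (a • ν₁) (b • ν₂) μ, Measure.rnDeriv_smul_left ν₁ μ a,
    Measure.rnDeriv_smul_left ν₂ μ b, Measure.rnDeriv_lt_top ν₁ μ,
    Measure.rnDeriv_lt_top ν₂ μ] with ω h h₁ h₂ h₁' h₂'
  rw [h, Pi.add_apply, h₁, h₂, Pi.smul_apply, Pi.smul_apply, ENNReal.smul_def,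
    ENNReal.smul_def, smul_eq_mul, smul_eq_mul, ENNReal.toReal_add
    (ENNReal.mul_ne_top ENNReal.coe_ne_top h₁'.ne) (ENNReal.mul_ne_top ENNReal.coe_ne_top h₂'.ne),
    ENNReal.toReal_mul, ENNReal.toReal_mul, ENNReal.coe_toReal, ENNReal.coe_toReal]

theorem convex_of_mem_iff_rnDeriv {P : Measure Ω} [SigmaFinite P] {𝒬 : Set (Measure Ω)}
    (h𝒬_finite : ∀ Q ∈ 𝒬, IsFiniteMeasure Q) (h𝒬_conv : ConvexMeasures 𝒬)
    {DT : Set (Lp ℝ 1 P)}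
    (hDT : ∀ f : Lp ℝ 1 P, f ∈ DT ↔ ∃ Q ∈ 𝒬, f =ᵐ[P] fun ω => (Q.rnDeriv P ω).toReal) :
    Convex ℝ DT := by
  intro f₁ hf₁ f₂ hf₂ a b ha hb hab
  obtain ⟨Q₁, hQ₁, hf₁⟩ := (hDT f₁).1 hf₁
  obtain ⟨Q₂, hQ₂, hf₂⟩ := (hDT f₂).1 hf₂
  have := h𝒬_finite Q₁ hQ₁
  have := h𝒬_finite Q₂ hQ₂
  set c : ℝ≥0 := ⟨a, ha⟩
  have hc : c ≤ 1 := by rw [← NNReal.coe_le_coe]; change a ≤ 1; linarith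
  have hc' : ((1 - c : ℝ≥0) : ℝ) = b := by rw [NNReal.coe_sub hc]; change 1 - a = b; linarith
  refine (hDT _).2 ⟨c • Q₁ + (1 - c) • Q₂, h𝒬_conv Q₁ hQ₁ Q₂ hQ₂ c hc, ?_⟩
  filter_upwards [Lp.coeFn_add (a • f₁) (b • f₂), Lp.coeFn_smul a f₁, Lp.coeFn_smul b f₂, hf₁, hf₂,
    toReal_rnDeriv_smul_add_smul (μ := P) (ν₁ := Q₁) (ν₂ := Q₂) c (1 - c)]
    with ω h h₁ h₂ h₁' h₂' hQ
  rw [h, Pi.add_apply, h₁, h₂, Pi.smul_apply, Pi.smul_apply, h₁', h₂', hQ, hc']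
  rfl

theorem pastingOf_withDensity_ofReal_pasteDensity {P Q₁ Q₀ : Measure Ω} [IsFiniteMeasure P]
    [IsFiniteMeasure Q₁] [IsFiniteMeasure Q₀] (ℱ : Filtration ℕ m) (t : ℕ) (h₁ : Q₁ ≪ P)
    (h₀ : Q₀ ≪ P) (h₀' : P ≪ Q₀) :
    PastingOf ℱ Q₁ Q₀ (P.withDensity fun ω => ENNReal.ofReal (pasteDensity (ℱ t) P Q₁ Q₀ ω))
      (fun _ => t) (isStoppingTime_const ℱ t) := by
  intro A hA
  have hk : 0 ≤ᵐ[Q₀] Q₀[A.indicator (fun _ => (1 : ℝ))|ℱ t] :=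
    condExp_nonneg (Eventually.of_forall (Set.indicator_nonneg fun _ _ => zero_le_one))
  have hℱt : (isStoppingTime_const ℱ t :
      IsStoppingTime ℱ fun _ => ((t : ℕ) : WithTop ℕ)).measurableSpace = ℱ t :=
    IsStoppingTime.measurableSpace_const ℱ t
  rw [hℱt, withDensity_ofReal_pasteDensity_apply (ℱ.le t) h₁ h₀ h₀' hA,
    integral_eq_lintegral_of_nonneg_ae (h₁.ae_le (h₀'.ae_le hk))
      (stronglyMeasurable_condExp.mono (ℱ.le t)).aestronglyMeasurable]

theorem mapsTo_pasteL1 {P : Measure Ω} [IsFiniteMeasure P] {T : ℕ} {ℱ : Filtration ℕ m}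
    {𝒬 : Set (Measure Ω)} (h𝒬_prob : ∀ Q ∈ 𝒬, IsProbabilityMeasure Q)
    (h𝒬_equiv : ∀ Q ∈ 𝒬, Q ≪ P ∧ P ≪ Q) (h𝒬_stable : StableUnderPasting ℱ T 𝒬)
    {DT : Set (Lp ℝ 1 P)}
    (hDT : ∀ f : Lp ℝ 1 P, f ∈ DT ↔ ∃ Q ∈ 𝒬, f =ᵐ[P] fun ω => (Q.rnDeriv P ω).toReal)
    {t : ℕ} (ht : t ≤ T) {Q₀ : Measure Ω} [IsFiniteMeasure Q₀] (hQ₀ : Q₀ ∈ 𝒬) :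
    MapsTo (pasteL1 (ℱ.le t) Measure.integrable_toReal_rnDeriv
      (toReal_rnDeriv_pos (h𝒬_equiv Q₀ hQ₀).2)) DT DT := by
  intro x hx
  obtain ⟨Q₁, hQ₁, hx⟩ := (hDT x).1 hx
  have := h𝒬_prob Q₁ hQ₁
  have hQ₃ := h𝒬_stable Q₁ hQ₁ Q₀ hQ₀ (fun _ => t) (isStoppingTime_const ℱ t) (fun _ => ht) _
    (isProbabilityMeasure_withDensity_ofReal_pasteDensity (ℱ.le t) (h𝒬_equiv Q₁ hQ₁).1
      (h𝒬_equiv Q₀ hQ₀).1 (h𝒬_equiv Q₀ hQ₀).2)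
    (pastingOf_withDensity_ofReal_pasteDensity ℱ t (h𝒬_equiv Q₁ hQ₁).1 (h𝒬_equiv Q₀ hQ₀).1
      (h𝒬_equiv Q₀ hQ₀).2)
  refine (hDT _).2 ⟨_, hQ₃, ?_⟩
  filter_upwards [coeFn_pasteL1 (ℱ.le t) _ _ x, condExp_congr_ae (m := ℱ t) hx,
    Measure.rnDeriv_withDensity P (measurable_pasteDensity (ℱ.le t)).ennreal_ofReal,
    pasteDensity_nonneg (ν₁ := Q₁) (ℱ.le t) (h𝒬_equiv Q₀ hQ₀).2] with ω h₁ h₂ h₃ h₄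
  rw [h₁, h₃, ENNReal.toReal_ofReal h₄, pasteDensity, Pi.mul_apply, Pi.mul_apply, h₂]

theorem stmt_3_general (P : Measure Ω) [IsProbabilityMeasure P]
    (T : ℕ) (ℱ : Filtration ℕ m)
    (𝒬 : Set (Measure Ω))
    (h𝒬prob : ∀ Q ∈ 𝒬, IsProbabilityMeasure Q)
    (h𝒬equiv : ∀ Q ∈ 𝒬, Q ≪ P ∧ P ≪ Q)
    (h𝒬conv : ConvexMeasures 𝒬)
    (h𝒬stable : StableUnderPasting ℱ T 𝒬)
    (DT : Set (Lp ℝ 1 P))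
    (hDT : ∀ f : Lp ℝ 1 P,
      f ∈ DT ↔ ∃ Q ∈ 𝒬, (f : Ω → ℝ) =ᵐ[P] fun ω => (Q.rnDeriv P ω).toReal)
    -- `D̄_t`: conditional expectations given `ℱ t` of elements of the `L¹`-closure of `D_T`
    (Dbar : ℕ → Set (Lp ℝ 1 P))
    (hDbar : ∀ t, ∀ g : Lp ℝ 1 P,
      g ∈ Dbar t ↔ ∃ f ∈ closure DT, (g : Ω → ℝ) =ᵐ[P] P[(f : Ω → ℝ) | ℱ t]) :
    ∀ t ≤ T, Convex ℝ (Dbar t) ∧ IsClosed (Dbar t) := by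
  intro t ht
  have hDbar_t : Dbar t = condExpL1CLM ℝ (ℱ.le t) P '' closure DT := by
    rw [image_condExpL1CLM]
    exact Set.ext (hDbar t)
  have hDT_conv : Convex ℝ DT :=
    convex_of_mem_iff_rnDeriv (fun Q hQ => have := h𝒬prob Q hQ; inferInstance) h𝒬conv hDT
  rw [hDbar_t]
  refine ⟨hDT_conv.closure.linear_image (condExpL1CLM ℝ (ℱ.le t) P).toLinearMap, ?_⟩
  rcases DT.eq_empty_or_nonempty with hDT_empty | ⟨f₀, hf₀⟩
  · simp [hDT_empty]
  obtain ⟨Q₀, hQ₀, -⟩ := (hDT f₀).1 hf₀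
  have := h𝒬prob Q₀ hQ₀
  exact isClosed_image_condExpL1CLM (ℱ.le t) _ _ isClosed_closure
    ((mapsTo_pasteL1 h𝒬prob h𝒬equiv h𝒬stable hDT ht hQ₀).closure (continuous_pasteL1 _ _ _))

/-- For a convex, pasting-stable set `𝒬` of probability measures equivalent to `P` with
derivative set `D_T ⊂ L¹(P)`, the sets `D̄_t = { E^P[D | F_t] : D ∈ closure D_T }` are
convex and closed in `L¹(F_T, P)` for each `t`. -/
theorem stmt_3 (P : Measure Ω) [IsProbabilityMeasure P]
    (T : ℕ) (ℱ : Filtration ℕ m) (hℱT : ℱ T = m)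
    (𝒬 : Set (Measure Ω))
    (h𝒬prob : ∀ Q ∈ 𝒬, IsProbabilityMeasure Q)
    (h𝒬equiv : ∀ Q ∈ 𝒬, Q ≪ P ∧ P ≪ Q)
    (h𝒬conv : ConvexMeasures 𝒬)
    (h𝒬stable : StableUnderPasting ℱ T 𝒬)
    (DT : Set (Lp ℝ 1 P))
    (hDT : ∀ f : Lp ℝ 1 P,
      f ∈ DT ↔ ∃ Q ∈ 𝒬, (f : Ω → ℝ) =ᵐ[P] fun ω => (Q.rnDeriv P ω).toReal)
    -- `D̄_t`: conditional expectations given `ℱ t` of elements of the `L¹`-closure of `D_T`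
    (Dbar : ℕ → Set (Lp ℝ 1 P))
    (hDbar : ∀ t, ∀ g : Lp ℝ 1 P,
      g ∈ Dbar t ↔ ∃ f ∈ closure DT, (g : Ω → ℝ) =ᵐ[P] P[(f : Ω → ℝ) | ℱ t]) :
    ∀ t ≤ T, Convex ℝ (Dbar t) ∧ IsClosed (Dbar t) :=
  stmt_3_general P T ℱ 𝒬 h𝒬prob h𝒬equiv h𝒬conv h𝒬stable DT hDT Dbar hDbar
end

section
/- If Z ≥ 0 is Q-uniformly integrable for a set Q of probability measures equivalent to P and satisfying the law of iterated expectations property (sup_{Q∈Q} E^Q[esssup_{Q'∈Q} E^{Q'}_t[X]] = sup_{Q∈Q} E^Q[X] for Q-uniformly integrable X), then esssup_{Q∈Q} E^Q[Z | F_t] is itself a Q-uniformly integrable random variable. -/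
open MeasureTheory

variable {Ω : Type*} {m : MeasurableSpace Ω}

/-- `f` is `𝒬`-uniformly integrable:
`lim_{K→∞} sup_{Q∈𝒬} E^Q[|f| 1{|f| ≥ K}] = 0`. -/
def QUnifInt (𝒬 : Set (Measure Ω)) (f : Ω → ℝ) : Prop :=
  ∀ ε > (0 : ℝ), ∃ K : ℝ, ∀ Q ∈ 𝒬, ∫ ω in {ω | K ≤ |f ω|}, |f ω| ∂Q ≤ ε

/-- `g` is an essential supremum (w.r.t. the `P`-a.e. order) of the family `f i`, `i ∈ S`. -/
def IsEssSupFam (P : Measure Ω) {ι : Type*} (S : Set ι) (f : ι → Ω → ℝ) (g : Ω → ℝ) : Prop :=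
  (∀ i ∈ S, f i ≤ᵐ[P] g) ∧ ∀ h : Ω → ℝ, (∀ i ∈ S, f i ≤ᵐ[P] h) → g ≤ᵐ[P] h

/-!
Fix `ε > 0` and, by uniform integrability of `Z`, a level `K ≥ 0` with
`sup_Q E^Q[Z; Z ≥ K] ≤ ε`. The bounded layers `Y_n = min(Z, K + n) - min(Z, K)` are
`𝒬`-uniformly integrable, so the law of iterated expectations applies to them: their conditional
essential suprema `V_n` satisfy `E^Q[V_n] ≤ sup_Q E^Q[Y_n] ≤ ε`. Since
`E^Q[Z | F_t] = E^Q[min(Z, K) | F_t] + E^Q[Y_n | F_t] + E^Q[(Z - K - n)⁺ | F_t]` and the last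
term tends to `0`, every `E^Q[Z | F_t]`, hence `S`, is bounded by `K + W` with `W = sup_n V_n`
and `E^Q[W] ≤ ε` for all `Q`. On `{S ≥ 2K}` this gives `S ≤ 2W`, whence uniform integrability.

The layers are bounded because a real `⨆` over an unbounded family is `0`, so the law says
nothing about variables whose conditional essential supremum has unbounded expectations.
-/

open Filter Topology
open scoped ENNReal

theorem exists_mem_forall_ae_le {μ : Measure Ω} {H : Set (Ω → ℝ)} (hne : H.Nonempty)
    (hint : ∀ h ∈ H, Integrable h μ) (hbdd : BddAbove ((fun h => ∫ ω, h ω ∂μ) '' H))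
    (hseq : ∀ u : ℕ → Ω → ℝ, (∀ n, u n ∈ H) → ∃ g ∈ H, ∀ n, u n ≤ᵐ[μ] g) :
    ∃ g ∈ H, ∀ h ∈ H, h ≤ᵐ[μ] g := by
  obtain ⟨r, -, hr, hrH⟩ := exists_seq_tendsto_sSup (hne.image _) hbdd
  choose u hu hur using hrH
  obtain ⟨g, hg, hug⟩ := hseq u hu
  have hg_max : ∀ h ∈ H, ∫ ω, h ω ∂μ ≤ ∫ ω, g ω ∂μ := by
    refine fun h hh => (le_csSup hbdd ⟨h, hh, rfl⟩).trans (le_of_tendsto' hr fun n => ?_)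
    rw [← hur n]
    exact integral_mono_ae (hint _ (hu n)) (hint g hg) (hug n)
  refine ⟨g, hg, fun h hh => ?_⟩
  -- a common upper bound `g'` of `h` and `g` has no larger integral than `g`, so `g' = g` a.e.
  obtain ⟨g', hg', hle⟩ := hseq (fun n => if n = 0 then h else g) fun n => by
    split_ifs <;> assumption
  have hgg' : g ≤ᵐ[μ] g' := by simpa using hle 1
  have hg_eq : g =ᵐ[μ] g' := (integral_eq_iff_of_ae_le (hint g hg) (hint g' hg') hgg').1
    (le_antisymm (integral_mono_ae (hint g hg) (hint g' hg') hgg') (hg_max g' hg'))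
  filter_upwards [hle 0, hg_eq] with ω hhω hgω
  simpa [hgω] using hhω

theorem exists_isEssSupFam_of_ae_mem_Icc (μ : Measure Ω) [IsFiniteMeasure μ] {ι : Type*}
    {s : Set ι} (hs : s.Nonempty) {f : ι → Ω → ℝ} {a b : ℝ} (hab : a ≤ b)
    (hf : ∀ i ∈ s, Measurable (f i)) (hfab : ∀ i ∈ s, ∀ᵐ ω ∂μ, f i ω ∈ Set.Icc a b) :
    ∃ g : Ω → ℝ, Measurable g ∧ (∀ ω, g ω ∈ Set.Icc a b) ∧ IsEssSupFam μ s f g := by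
  set H : Set (Ω → ℝ) := {h | Measurable h ∧ (∀ ω, h ω ∈ Set.Icc a b) ∧
    ∀ u : Ω → ℝ, (∀ i ∈ s, f i ≤ᵐ[μ] u) → h ≤ᵐ[μ] u}
  set F : ι → Ω → ℝ := fun i ω => max a (min (f i ω) b)
  have hfF : ∀ i ∈ s, f i =ᵐ[μ] F i := fun i hi => by
    filter_upwards [hfab i hi] with ω hω
    simp [F, hω.1, hω.2]
  have hFH : ∀ i ∈ s, F i ∈ H := fun i hi =>
    ⟨measurable_const.max ((hf i hi).min measurable_const),
      fun ω => ⟨le_max_left _ _, max_le hab (min_le_right _ _)⟩,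
      fun u hu => (hfF i hi).symm.trans_le (hu i hi)⟩
  have hbound : ∀ h ∈ H, ∀ ω, ‖h ω‖ ≤ max |a| |b| := fun h hh ω =>
    abs_le_max_abs_abs (hh.2.1 ω).1 (hh.2.1 ω).2
  have hint : ∀ h ∈ H, Integrable h μ := fun h hh =>
    .of_bound hh.1.aestronglyMeasurable _ (.of_forall (hbound h hh))
  have hbdd : BddAbove ((fun h => ∫ ω, h ω ∂μ) '' H) := by
    refine ⟨max |a| |b| * μ.real Set.univ, ?_⟩
    rintro _ ⟨h, hh, rfl⟩
    exact (le_abs_self _).trans (norm_integral_le_of_norm_le_const (.of_forall (hbound h hh)))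
  have hseq : ∀ u : ℕ → Ω → ℝ, (∀ n, u n ∈ H) → ∃ g ∈ H, ∀ n, u n ≤ᵐ[μ] g := by
    intro u hu
    have hu_bdd : ∀ ω, BddAbove (Set.range fun n => u n ω) := fun ω =>
      ⟨b, by rintro _ ⟨n, rfl⟩; exact ((hu n).2.1 ω).2⟩
    refine ⟨fun ω => ⨆ n, u n ω, ⟨.iSup fun n => (hu n).1, fun ω => ⟨?_, ?_⟩, fun v hv => ?_⟩,
      fun n => .of_forall fun ω => le_ciSup (hu_bdd ω) n⟩
    · exact ((hu 0).2.1 ω).1.trans (le_ciSup (hu_bdd ω) 0)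
    · exact ciSup_le fun n => ((hu n).2.1 ω).2
    · filter_upwards [ae_all_iff.2 fun n => (hu n).2.2 v hv] with ω hω using ciSup_le hω
  obtain ⟨i, hi⟩ := hs
  obtain ⟨g, ⟨hg, hgab, hg_least⟩, hg_greatest⟩ :=
    exists_mem_forall_ae_le ⟨F i, hFH i hi⟩ hint hbdd hseq
  exact ⟨g, hg, hgab, fun j hj => (hfF j hj).trans_le (hg_greatest _ (hFH j hj)), hg_least⟩

theorem ae_le_of_forall_ae_le_add_of_tendsto_integral {μ : Measure Ω} {f g : Ω → ℝ}
    {R : ℕ → Ω → ℝ} (hR : ∀ n, Integrable (R n) μ) (hR0 : ∀ n, 0 ≤ᵐ[μ] R n)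
    (hlim : Tendsto (fun n => ∫ ω, R n ω ∂μ) atTop (𝓝 0)) (hle : ∀ n, f ≤ᵐ[μ] g + R n) :
    f ≤ᵐ[μ] g := by
  set r : Ω → ℝ≥0∞ := fun ω => ⨅ n, ENNReal.ofReal (R n ω)
  have hr_int : ∫⁻ ω, r ω ∂μ = 0 := by
    refine le_antisymm (ge_of_tendsto' (by simpa using ENNReal.tendsto_ofReal hlim) fun n => ?_)
      zero_le
    rw [ofReal_integral_eq_lintegral_ofReal (hR n) (hR0 n)]
    exact lintegral_mono fun ω => iInf_le _ n
  have hr : r =ᵐ[μ] 0 := (lintegral_eq_zero_iff'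
    (AEMeasurable.iInf fun n => (hR n).aemeasurable.ennreal_ofReal)).1 hr_int
  filter_upwards [ae_all_iff.2 hle, hr] with ω hω hrω
  have : ENNReal.ofReal (f ω - g ω) ≤ r ω :=
    le_iInf fun n => ENNReal.ofReal_le_ofReal (by linarith [hω n, Pi.add_apply g (R n) ω])
  rw [hrω, Pi.zero_apply, nonpos_iff_eq_zero, ENNReal.ofReal_eq_zero, sub_nonpos] at this
  exact this

theorem lintegral_iSup_ofReal_le {μ : Measure Ω} {V : ℕ → Ω → ℝ} {ε : ℝ}
    (hV : ∀ n, Integrable (V n) μ) (hV0 : ∀ n, 0 ≤ᵐ[μ] V n)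
    (hmono : ∀ᵐ ω ∂μ, Monotone fun n => V n ω) (hε : ∀ n, ∫ ω, V n ω ∂μ ≤ ε) :
    ∫⁻ ω, ⨆ n, ENNReal.ofReal (V n ω) ∂μ ≤ ENNReal.ofReal ε := by
  rw [lintegral_iSup' (fun n => (hV n).aemeasurable.ennreal_ofReal)
    (hmono.mono fun ω h _ _ hab => ENNReal.ofReal_le_ofReal (h hab))]
  refine iSup_le fun n => ?_
  rw [← ofReal_integral_eq_lintegral_ofReal (hV n) (hV0 n)]
  exact ENNReal.ofReal_le_ofReal (hε n)

theorem integral_min_sub_min_le_setIntegral {μ : Measure Ω} [IsFiniteMeasure μ] {Z : Ω → ℝ}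
    (hZ : Integrable Z μ) {K L : ℝ} (hK : 0 ≤ K) (hKL : K ≤ L) :
    ∫ ω, (min (Z ω) L - min (Z ω) K) ∂μ ≤ ∫ ω in {ω | K ≤ |Z ω|}, |Z ω| ∂μ := by
  rw [← setIntegral_eq_integral_of_forall_compl_eq_zero fun ω (hω : ¬K ≤ |Z ω|) => by
    rw [min_eq_left (by linarith [le_abs_self (Z ω)] : Z ω ≤ L),
      min_eq_left (by linarith [le_abs_self (Z ω)] : Z ω ≤ K), sub_self]]
  refine setIntegral_mono (((hZ.inf (integrable_const L)).sub
    (hZ.inf (integrable_const K))).integrableOn) hZ.abs.integrableOn fun ω => ?_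
  rcases le_total (Z ω) K with h | h
  · rw [min_eq_left h, min_eq_left (h.trans hKL), sub_self]; exact abs_nonneg _
  · rw [min_eq_right h]; linarith [min_le_left (Z ω) L, le_abs_self (Z ω)]

theorem le_of_biSup_eq_of_forall_le {α : Type*} {s : Set α} {F G : α → ℝ} {C δ : ℝ}
    (hF : ∀ a ∈ s, F a ≤ C) (hG : ∀ a ∈ s, G a ≤ δ) (hδ : 0 ≤ δ)
    (hFG : ⨆ a ∈ s, F a = ⨆ a ∈ s, G a) {a : α} (ha : a ∈ s) : F a ≤ δ := by
  have hbdd : BddAbove (Set.range fun a => ⨆ _ : a ∈ s, F a) := by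
    refine ⟨max C 0, ?_⟩
    rintro _ ⟨b, rfl⟩
    exact Real.iSup_le (fun hb => (hF b hb).trans (le_max_left _ _)) (le_max_right _ _)
  have : Nonempty (a ∈ s) := ⟨ha⟩
  calc F a = ⨆ _ : a ∈ s, F a := ciSup_const.symm
    _ ≤ ⨆ a ∈ s, F a := le_ciSup hbdd a
    _ = ⨆ a ∈ s, G a := hFG
    _ ≤ δ := Real.iSup_le (fun b => Real.iSup_le (hG b) hδ) hδ

theorem qUnifInt_of_forall_abs_le (𝒬 : Set (Measure Ω)) {f : Ω → ℝ} {C : ℝ}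
    (hC : ∀ ω, |f ω| ≤ C) : QUnifInt 𝒬 f := by
  refine fun ε hε => ⟨C + 1, fun Q _ => ?_⟩
  have hempty : {ω | C + 1 ≤ |f ω|} = ∅ :=
    Set.eq_empty_of_forall_notMem fun ω (hω : C + 1 ≤ |f ω|) => by linarith [hC ω]
  rw [hempty, Measure.restrict_empty, integral_zero_measure]
  exact hε.le

theorem QUnifInt.eventually_setIntegral_le {𝒬 : Set (Measure Ω)} {f : Ω → ℝ}
    (hf : QUnifInt 𝒬 f) (hint : ∀ Q ∈ 𝒬, Integrable f Q) {ε : ℝ} (hε : 0 < ε) :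
    ∀ᶠ K in atTop, ∀ Q ∈ 𝒬, ∫ ω in {ω | K ≤ |f ω|}, |f ω| ∂Q ≤ ε := by
  obtain ⟨K, hK⟩ := hf ε hε
  filter_upwards [eventually_ge_atTop K] with K' hK' Q hQ
  refine (setIntegral_mono_set (hint Q hQ).abs.integrableOn
    (.of_forall fun ω => abs_nonneg _) (.of_forall fun ω hω => ?_)).trans (hK Q hQ)
  exact hK'.trans hω

theorem QUnifInt.of_forall_exists_ae_le_add {𝒬 : Set (Measure Ω)} {f : Ω → ℝ}
    (h : ∀ ε > 0, ∃ c : ℝ, 0 ≤ c ∧ ∃ W : Ω → ℝ≥0∞, Measurable W ∧ ∀ Q ∈ 𝒬,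
      (∀ᵐ ω ∂Q, ENNReal.ofReal |f ω| ≤ ENNReal.ofReal c + W ω) ∧
        ∫⁻ ω, W ω ∂Q ≤ ENNReal.ofReal ε) :
    QUnifInt 𝒬 f := by
  intro ε hε
  obtain ⟨c, hc, W, hW, hfW⟩ := h (ε / 2) (half_pos hε)
  refine ⟨2 * c, fun Q hQ => ?_⟩
  obtain ⟨hle, hWε⟩ := hfW Q hQ
  set A := {ω | 2 * c ≤ |f ω|}
  set B := {ω | ENNReal.ofReal (2 * c) ≤ ENNReal.ofReal c + W ω}
  have hB : MeasurableSet B := measurableSet_le measurable_const (measurable_const.add hW)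
  have hAB : A ≤ᵐ[Q] B := by
    filter_upwards [hle] with ω hω hA
    exact (ENNReal.ofReal_le_ofReal hA).trans hω
  -- on `B` we have `c ≤ W`, hence `|f| ≤ c + W ≤ 2 W`
  have hfB : ∀ᵐ ω ∂Q.restrict B, ENNReal.ofReal |f ω| ≤ 2 * W ω := by
    filter_upwards [ae_restrict_mem hB, ae_restrict_of_ae hle] with ω
      (hωB : ENNReal.ofReal (2 * c) ≤ ENNReal.ofReal c + W ω) hω
    rw [ENNReal.ofReal_mul zero_le_two, ENNReal.ofReal_ofNat, two_mul] at hωB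
    have hcW := (ENNReal.add_le_add_iff_left ENNReal.ofReal_ne_top).1 hωB
    exact hω.trans (two_mul (W ω) ▸ add_le_add hcW le_rfl)
  have hlint : ∫⁻ ω in A, ENNReal.ofReal |f ω| ∂Q ≤ ENNReal.ofReal ε :=
    calc ∫⁻ ω in A, ENNReal.ofReal |f ω| ∂Q
        ≤ ∫⁻ ω in B, ENNReal.ofReal |f ω| ∂Q :=
          lintegral_mono' (Measure.restrict_mono_ae hAB) le_rfl
      _ ≤ ∫⁻ ω in B, 2 * W ω ∂Q := lintegral_mono_ae hfB
      _ ≤ ∫⁻ ω, 2 * W ω ∂Q := setLIntegral_le_lintegral _ _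
      _ = 2 * ∫⁻ ω, W ω ∂Q := lintegral_const_mul 2 hW
      _ ≤ 2 * ENNReal.ofReal (ε / 2) := by gcongr
      _ = ENNReal.ofReal ε := by
        rw [← ENNReal.ofReal_ofNat 2, ← ENNReal.ofReal_mul zero_le_two]; ring_nf
  calc ∫ ω in A, |f ω| ∂Q ≤ (∫⁻ ω in A, ENNReal.ofReal |f ω| ∂Q).toReal := by
        simpa using (le_abs_self _).trans
          (norm_integral_le_lintegral_norm (μ := Q.restrict A) fun ω => |f ω|)
    _ ≤ (ENNReal.ofReal ε).toReal := ENNReal.toReal_mono ENNReal.ofReal_ne_top hlint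
    _ = ε := ENNReal.toReal_ofReal hε.le

def HasLawOfIteratedEssSup (P : Measure Ω) (𝒬 : Set (Measure Ω)) (m' : MeasurableSpace Ω) :
    Prop :=
  ∀ X : Ω → ℝ, QUnifInt 𝒬 X → (∀ Q ∈ 𝒬, Integrable X Q) →
    ∀ SX : Ω → ℝ, IsEssSupFam P 𝒬 (fun Q => Q[X | m']) SX →
      (⨆ Q ∈ 𝒬, ∫ ω, SX ω ∂Q) = ⨆ Q ∈ 𝒬, ∫ ω, X ω ∂Q

section CondExp

variable {m' m₀ : MeasurableSpace Ω}

theorem exists_isEssSupFam_condExp (hm : m' ≤ m₀) (P : Measure Ω)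
    [IsFiniteMeasure P] {𝒬 : Set (Measure Ω)} (h𝒬 : 𝒬.Nonempty)
    (h𝒬fin : ∀ Q ∈ 𝒬, IsFiniteMeasure Q) (hP𝒬 : ∀ Q ∈ 𝒬, P ≪ Q) {X : Ω → ℝ} {a b : ℝ}
    (hab : a ≤ b) (hX : ∀ Q ∈ 𝒬, Integrable X Q) (hXab : ∀ ω, X ω ∈ Set.Icc a b) :
    ∃ V : Ω → ℝ, Measurable V ∧ (∀ ω, V ω ∈ Set.Icc a b) ∧
      IsEssSupFam P 𝒬 (fun Q => Q[X | m']) V := by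
  refine exists_isEssSupFam_of_ae_mem_Icc P h𝒬 hab
    (fun Q _ => (stronglyMeasurable_condExp.mono hm).measurable) fun Q hQ => (hP𝒬 Q hQ).ae_le ?_
  have := h𝒬fin Q hQ
  have hlow := condExp_mono (m := m') (integrable_const a) (hX Q hQ)
    (.of_forall fun ω => (hXab ω).1)
  have hup := condExp_mono (m := m') (hX Q hQ) (integrable_const b)
    (.of_forall fun ω => (hXab ω).2)
  rw [condExp_const hm] at hlow hup
  filter_upwards [hlow, hup] with ω h1 h2 using ⟨h1, h2⟩

theorem condExp_ae_le_of_forall_condExp_min_ae_le (hm : m' ≤ m₀) {μ : Measure Ω}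
    [IsFiniteMeasure μ] {Z g : Ω → ℝ} (hZ : Integrable Z μ) {L : ℕ → ℝ}
    (hL : Tendsto L atTop atTop) (h : ∀ n, μ[fun ω => min (Z ω) (L n) | m'] ≤ᵐ[μ] g) :
    μ[Z | m'] ≤ᵐ[μ] g := by
  have hmin : ∀ n, Integrable (fun ω => min (Z ω) (L n)) μ := fun n =>
    hZ.inf (integrable_const _)
  refine ae_le_of_forall_ae_le_add_of_tendsto_integral
    (R := fun n => μ[fun ω => Z ω - min (Z ω) (L n) | m']) (fun n => integrable_condExp)
    (fun n => condExp_nonneg (.of_forall fun ω => sub_nonneg.2 (min_le_left _ _))) ?_ fun n => ?_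
  · simp_rw [integral_condExp hm]
    have hlim := tendsto_integral_filter_of_dominated_convergence
      (F := fun n ω => Z ω - min (Z ω) (L n)) (f := fun _ => 0)
      (fun ω => |Z ω|)
      (.of_forall fun n => (hZ.sub (hmin n)).aestronglyMeasurable) ?_ hZ.abs
      (.of_forall fun ω => tendsto_const_nhds.congr'
        ((hL.eventually_ge_atTop (Z ω)).mono fun n hn => by simp [min_eq_left hn]))
    · simpa using hlim
    filter_upwards [hL.eventually_ge_atTop 0] with n hn
    refine .of_forall fun ω => ?_
    rw [Real.norm_eq_abs, abs_of_nonneg (sub_nonneg.2 (min_le_left _ _))]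
    rcases min_choice (Z ω) (L n) with h | h <;> rw [h] <;>
      linarith [le_abs_self (Z ω), abs_nonneg (Z ω)]
  · have hsplit : μ[Z | m'] =ᵐ[μ]
        μ[fun ω => min (Z ω) (L n) | m'] + μ[fun ω => Z ω - min (Z ω) (L n) | m'] := by
      have := condExp_add (m := m') (hmin n) (hZ.sub (hmin n))
      rwa [add_sub_cancel] at this
    filter_upwards [hsplit, h n] with ω h1 h2
    rw [h1, Pi.add_apply, Pi.add_apply]
    linarith

theorem condExp_min_ae_le_add_condExp_sub (hm : m' ≤ m₀) {μ : Measure Ω} [IsFiniteMeasure μ]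
    {Z : Ω → ℝ} (hZ : Integrable Z μ) (K L : ℝ) :
    μ[fun ω => min (Z ω) L | m'] ≤ᵐ[μ]
      fun ω => K + μ[fun ω => min (Z ω) L - min (Z ω) K | m'] ω := by
  have hminK : Integrable (fun ω => min (Z ω) K) μ := hZ.inf (integrable_const K)
  have hminL : Integrable (fun ω => min (Z ω) L) μ := hZ.inf (integrable_const L)
  have hsplit := condExp_add (m := m') hminK (hminL.sub hminK)
  rw [add_sub_cancel] at hsplit
  have hK := condExp_mono (m := m') hminK (integrable_const K)
    (.of_forall fun ω => min_le_right _ _)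
  rw [condExp_const hm] at hK
  filter_upwards [hsplit, hK] with ω h1 h2
  rw [h1, Pi.add_apply]
  exact add_le_add h2 le_rfl

theorem exists_isEssSupFam_condExp_min_sub_min (hm : m' ≤ m₀) {P : Measure Ω} [IsFiniteMeasure P]
    {𝒬 : Set (Measure Ω)} (h𝒬 : 𝒬.Nonempty) (h𝒬prob : ∀ Q ∈ 𝒬, IsProbabilityMeasure Q)
    (hP𝒬 : ∀ Q ∈ 𝒬, P ≪ Q) (hLIE : HasLawOfIteratedEssSup P 𝒬 m') {Z : Ω → ℝ}
    (hZint : ∀ Q ∈ 𝒬, Integrable Z Q) {K ε : ℝ} (hK : 0 ≤ K) (hε : 0 ≤ ε)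
    (hKε : ∀ Q ∈ 𝒬, ∫ ω in {ω | K ≤ |Z ω|}, |Z ω| ∂Q ≤ ε) (n : ℕ) :
    ∃ V : Ω → ℝ, Measurable V ∧ (∀ ω, V ω ∈ Set.Icc 0 (n : ℝ)) ∧
      IsEssSupFam P 𝒬 (fun Q => Q[fun ω => min (Z ω) (K + n) - min (Z ω) K | m']) V ∧
      ∀ Q ∈ 𝒬, ∫ ω, V ω ∂Q ≤ ε := by
  set Y : Ω → ℝ := fun ω => min (Z ω) (K + n) - min (Z ω) K
  have hn : (0 : ℝ) ≤ n := n.cast_nonneg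
  have hY : ∀ ω, Y ω ∈ Set.Icc 0 (n : ℝ) := fun ω => by
    refine ⟨sub_nonneg.2 (min_le_min_left _ (by linarith)), ?_⟩
    rw [sub_le_iff_le_add', ← min_add_add_right]
    exact min_le_min (le_add_of_nonneg_right hn) le_rfl
  have hYint : ∀ Q ∈ 𝒬, Integrable Y Q := fun Q hQ => by
    have := h𝒬prob Q hQ
    exact ((hZint Q hQ).inf (integrable_const _)).sub ((hZint Q hQ).inf (integrable_const _))
  obtain ⟨V, hV, hVn, hVsup⟩ := exists_isEssSupFam_condExp hm P h𝒬
    (fun Q hQ => have := h𝒬prob Q hQ; inferInstance) hP𝒬 hn hYint hY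
  refine ⟨V, hV, hVn, hVsup, fun Q hQ => le_of_biSup_eq_of_forall_le (C := n)
    (fun Q hQ => ?_) (fun Q hQ => ?_) hε (hLIE Y (qUnifInt_of_forall_abs_le 𝒬 (C := n) fun ω => ?_)
      hYint V hVsup) hQ⟩
  · have := h𝒬prob Q hQ
    calc ∫ ω, V ω ∂Q ≤ ‖∫ ω, V ω ∂Q‖ := le_abs_self _
      _ ≤ n * Q.real Set.univ := norm_integral_le_of_norm_le_const
          (.of_forall fun ω => by rw [Real.norm_of_nonneg (hVn ω).1]; exact (hVn ω).2)
      _ = n := by simp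
  · have := h𝒬prob Q hQ
    exact (integral_min_sub_min_le_setIntegral (hZint Q hQ) hK (by linarith)).trans (hKε Q hQ)
  · rw [abs_of_nonneg (hY ω).1]; exact (hY ω).2

theorem exists_condExp_ae_le_add_of_qUnifInt (hm : m' ≤ m₀) {P : Measure Ω} [IsFiniteMeasure P]
    {𝒬 : Set (Measure Ω)} (h𝒬 : 𝒬.Nonempty) (h𝒬prob : ∀ Q ∈ 𝒬, IsProbabilityMeasure Q)
    (h𝒬equiv : ∀ Q ∈ 𝒬, Q ≪ P ∧ P ≪ Q) (hLIE : HasLawOfIteratedEssSup P 𝒬 m') {Z : Ω → ℝ}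
    (hZint : ∀ Q ∈ 𝒬, Integrable Z Q) (hZui : QUnifInt 𝒬 Z) {ε : ℝ} (hε : 0 < ε) :
    ∃ K : ℝ, 0 ≤ K ∧ ∃ W : Ω → ℝ≥0∞, Measurable W ∧ ∀ Q ∈ 𝒬,
      ∫⁻ ω, W ω ∂Q ≤ ENNReal.ofReal ε ∧ Q[Z | m'] ≤ᵐ[P] fun ω => K + (W ω).toReal := by
  obtain ⟨K, hKε, hK⟩ :=
    ((hZui.eventually_setIntegral_le hZint hε).and (eventually_ge_atTop 0)).exists
  choose V hV hVn hVsup hVε using exists_isEssSupFam_condExp_min_sub_min hm h𝒬 h𝒬prob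
    (fun Q hQ => (h𝒬equiv Q hQ).2) hLIE hZint hK hε.le hKε
  have hVmono : ∀ᵐ ω ∂P, Monotone fun n => V n ω := by
    refine (ae_all_iff.2 fun n => (hVsup n).2 _ fun Q hQ => ?_).mono
      fun ω hω => monotone_nat_of_le_succ hω
    have := h𝒬prob Q hQ
    have hint : ∀ L, Integrable (fun ω => min (Z ω) L - min (Z ω) K) Q := fun L =>
      ((hZint Q hQ).inf (integrable_const L)).sub ((hZint Q hQ).inf (integrable_const K))
    refine EventuallyLE.trans ((h𝒬equiv Q hQ).2.ae_le (condExp_mono (hint _) (hint _)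
      (.of_forall fun ω => ?_))) ((hVsup (n + 1)).1 Q hQ)
    push_cast
    exact sub_le_sub_right (min_le_min_left _ (by linarith)) _
  set W : Ω → ℝ≥0∞ := fun ω => ⨆ n, ENNReal.ofReal (V n ω)
  have hW : Measurable W := .iSup fun n => (hV n).ennreal_ofReal
  refine ⟨K, hK, W, hW, fun Q hQ => ?_⟩
  have := h𝒬prob Q hQ
  have hWε : ∫⁻ ω, W ω ∂Q ≤ ENNReal.ofReal ε := lintegral_iSup_ofReal_le
    (fun n => .of_bound (hV n).aestronglyMeasurable n (.of_forall fun ω => by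
      rw [Real.norm_of_nonneg (hVn n ω).1]; exact (hVn n ω).2))
    (fun n => .of_forall fun ω => (hVn n ω).1) ((h𝒬equiv Q hQ).1.ae_le hVmono)
    fun n => hVε n Q hQ
  have hWfin : ∀ᵐ ω ∂Q, W ω ≠ ⊤ :=
    (ae_lt_top hW (hWε.trans_lt ENNReal.ofReal_lt_top).ne).mono fun ω => ne_of_lt
  refine ⟨hWε, (h𝒬equiv Q hQ).2.ae_le (condExp_ae_le_of_forall_condExp_min_ae_le hm (hZint Q hQ)
    (tendsto_atTop_add_const_left _ K tendsto_natCast_atTop_atTop) fun n => ?_)⟩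
  filter_upwards [condExp_min_ae_le_add_condExp_sub hm (hZint Q hQ) K (K + n),
    (h𝒬equiv Q hQ).1.ae_le ((hVsup n).1 Q hQ), hWfin] with ω hKY hYV hWω
  refine hKY.trans (add_le_add le_rfl (hYV.trans ?_))
  exact (ENNReal.ofReal_le_iff_le_toReal hWω).1 (le_iSup (fun n => ENNReal.ofReal (V n ω)) n)

end CondExp

theorem stmt_6_general (P : Measure Ω) [IsProbabilityMeasure P]
    (ℱ : Filtration ℕ m) (t : ℕ)
    (𝒬 : Set (Measure Ω))
    (h𝒬prob : ∀ Q ∈ 𝒬, IsProbabilityMeasure Q)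
    (h𝒬equiv : ∀ Q ∈ 𝒬, Q ≪ P ∧ P ≪ Q)
    -- law of iterated expectations property for `𝒬`-uniformly integrable variables
    (hLIE : ∀ X : Ω → ℝ, QUnifInt 𝒬 X → (∀ Q ∈ 𝒬, Integrable X Q) →
      ∀ SX : Ω → ℝ, IsEssSupFam P 𝒬 (fun Q => Q[X | ℱ t]) SX →
        (⨆ Q ∈ 𝒬, ∫ ω, SX ω ∂Q) = ⨆ Q ∈ 𝒬, ∫ ω, X ω ∂Q)
    (Z : Ω → ℝ) (hZnonneg : ∀ ω, 0 ≤ Z ω)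
    (hZint : ∀ Q ∈ 𝒬, Integrable Z Q)
    (hZui : QUnifInt 𝒬 Z)
    (S : Ω → ℝ) (hS : IsEssSupFam P 𝒬 (fun Q => Q[Z | ℱ t]) S) :
    QUnifInt 𝒬 S := by
  rcases 𝒬.eq_empty_or_nonempty with rfl | ⟨Q₀, hQ₀⟩
  · exact fun ε _ => ⟨0, fun Q hQ => hQ.elim⟩
  have hS_nonneg : 0 ≤ᵐ[P] S := by
    filter_upwards [(h𝒬equiv Q₀ hQ₀).2.ae_le (condExp_nonneg (m := ℱ t) (.of_forall hZnonneg)),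
      hS.1 Q₀ hQ₀] with ω h0 hSω using h0.trans hSω
  refine QUnifInt.of_forall_exists_ae_le_add fun ε hε => ?_
  obtain ⟨K, hK, W, hW, hZW⟩ := exists_condExp_ae_le_add_of_qUnifInt (ℱ.le t) ⟨Q₀, hQ₀⟩
    h𝒬prob h𝒬equiv hLIE hZint hZui hε
  have hSW : S ≤ᵐ[P] fun ω => K + (W ω).toReal := hS.2 _ fun Q hQ => (hZW Q hQ).2
  refine ⟨K, hK, W, hW, fun Q hQ => ⟨(h𝒬equiv Q hQ).1.ae_le ?_, (hZW Q hQ).1⟩⟩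
  filter_upwards [hSW, hS_nonneg] with ω hSω h0
  calc ENNReal.ofReal |S ω| ≤ ENNReal.ofReal (K + (W ω).toReal) :=
        ENNReal.ofReal_le_ofReal (by rwa [abs_of_nonneg h0])
    _ = ENNReal.ofReal K + ENNReal.ofReal (W ω).toReal :=
        ENNReal.ofReal_add hK ENNReal.toReal_nonneg
    _ ≤ ENNReal.ofReal K + W ω := add_le_add le_rfl ENNReal.ofReal_toReal_le

/-- If `Z ≥ 0` is `𝒬`-uniformly integrable for a set `𝒬` of probability measures
equivalent to `P` satisfying the law of iterated expectations property, then
`esssup_{Q∈𝒬} E^Q[Z | F_t]` is itself `𝒬`-uniformly integrable. -/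
theorem stmt_6 (P : Measure Ω) [IsProbabilityMeasure P]
    (T : ℕ) (ℱ : Filtration ℕ m) (hℱT : ℱ T = m) (t : ℕ) (ht : t ≤ T)
    (𝒬 : Set (Measure Ω))
    (h𝒬prob : ∀ Q ∈ 𝒬, IsProbabilityMeasure Q)
    (h𝒬equiv : ∀ Q ∈ 𝒬, Q ≪ P ∧ P ≪ Q)
    -- law of iterated expectations property for `𝒬`-uniformly integrable variables
    (hLIE : ∀ X : Ω → ℝ, QUnifInt 𝒬 X → (∀ Q ∈ 𝒬, Integrable X Q) →
      ∀ SX : Ω → ℝ, IsEssSupFam P 𝒬 (fun Q => Q[X | ℱ t]) SX →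
        (⨆ Q ∈ 𝒬, ∫ ω, SX ω ∂Q) = ⨆ Q ∈ 𝒬, ∫ ω, X ω ∂Q)
    (Z : Ω → ℝ) (hZmeas : Measurable Z) (hZnonneg : ∀ ω, 0 ≤ Z ω)
    (hZint : ∀ Q ∈ 𝒬, Integrable Z Q)
    (hZui : QUnifInt 𝒬 Z)
    (S : Ω → ℝ) (hS : IsEssSupFam P 𝒬 (fun Q => Q[Z | ℱ t]) S) :
    QUnifInt 𝒬 S :=
  stmt_6_general P ℱ t 𝒬 h𝒬prob h𝒬equiv hLIE Z hZnonneg hZint hZui S hS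
end
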